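/- arXiv:1702.04786 — 4 statements merged into one kernel-verified Lean document; each statement's English description precedes it below -/
import Mathlib

section
/- In a directed graph G with source s, sink t, and a strongly connected component C not containing s or t: if C has an entrance u and an exit v, then any path Q inside C from u to v is useful, i.e., Q extends to a simple s,t-path in G. -/
/-!
Directed graphs are modelled by an arc relation `A : V → V → Prop`.
A simple directed path is a `List V` that is `Chain' A`, has no repeated
vertices, and has prescribed first and last vertices.
-/

variable {V : Type*}

/-- `l` is a simple directed path from `s` to `t` in the digraph with arcs `A`. -/
def IsPathFrom (A : V → V → Prop) (s t : V) (l : List V) : Prop :=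
  l.Chain' A ∧ l.Nodup ∧ l.head? = some s ∧ l.getLast? = some t

/-- The arc `(u,v)` is useful w.r.t. `s,t`: some simple `s,t`-path contains it
(i.e. `u,v` appear consecutively on the path). -/
def ArcUseful (A : V → V → Prop) (s t u v : V) : Prop :=
  ∃ l : List V, IsPathFrom A s t l ∧ [u, v] <:+: l

/-- The path `P` is useful w.r.t. `s,t`: some simple `s,t`-path contains it
as a (consecutive) subpath. -/
def PathUseful (A : V → V → Prop) (s t : V) (P : List V) : Prop :=
  ∃ l : List V, IsPathFrom A s t l ∧ P <:+: l

/-- A set of vertices is strongly connected: any two of its vertices are joined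
by a directed path staying inside the set. -/
def StronglyConnected (A : V → V → Prop) (C : Set V) : Prop :=
  ∀ u ∈ C, ∀ v ∈ C, Relation.ReflTransGen (fun a b => A a b ∧ a ∈ C ∧ b ∈ C) u v

/-- `C` is a strongly connected component: a maximal strongly connected set. -/
def IsSCC (A : V → V → Prop) (C : Set V) : Prop :=
  StronglyConnected A C ∧ ∀ D : Set V, StronglyConnected A D → C ⊆ D → D = C

/-- `u` is an entrance of `C`: there is a simple `s,u`-path meeting `C` only at `u`. -/
def IsEntrance (A : V → V → Prop) (s : V) (C : Set V) (u : V) : Prop :=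
  u ∈ C ∧ ∃ l : List V, IsPathFrom A s u l ∧ ∀ x ∈ l, x ∈ C → x = u

/-- `v` is an exit of `C`: there is a simple `v,t`-path meeting `C` only at `v`. -/
def IsExit (A : V → V → Prop) (t : V) (C : Set V) (v : V) : Prop :=
  v ∈ C ∧ ∃ l : List V, IsPathFrom A v t l ∧ ∀ x ∈ l, x ∈ C → x = v

/-!
Splice the three paths: the entrance path without its last vertex, then `Q`, then the exit path
without its first vertex. Entrance and exit paths meet `C` only at their ends, so the pieces can
only collide at a vertex `x` common to the entrance and exit paths. Such an `x` is reachable from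
`v` and reaches `u`, so by maximality of `C` it lies in `C`, forcing `x = u = v`.
-/

open Relation

namespace List.IsChain

variable {α : Type*} {r : α → α → Prop} {l : List α} {a x : α}

theorem reflTransGen_of_head?_eq_of_mem (hl : l.IsChain r) (ha : l.head? = some a)
    (hx : x ∈ l) : ReflTransGen r a x :=
  hl.induction (ReflTransGen r a) l (fun _ _ hxy hax => hax.tail hxy)
    (fun hne => by rw [(head_eq_iff_head?_eq_some hne).2 ha]) x hx

theorem reflTransGen_of_mem_of_getLast?_eq (hl : l.IsChain r) (ha : l.getLast? = some a)
    (hx : x ∈ l) : ReflTransGen r x a :=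
  hl.backwards_induction (ReflTransGen r · a) l (fun _ _ hxy hya => hya.head hxy)
    (fun hne => by rw [(getLast_eq_iff_getLast?_eq_some hne).2 ha]) x hx

end List.IsChain

section

variable {A : V → V → Prop}

theorem stronglyConnected_of_reflTransGen {D : Set V}
    (hconvex : ∀ a ∈ D, ∀ b ∈ D, ∀ x, ReflTransGen A a x → ReflTransGen A x b → x ∈ D)
    (hreach : ∀ a ∈ D, ∀ b ∈ D, ReflTransGen A a b) : StronglyConnected A D := by
  intro a ha b hb
  induction hreach a ha b hb using ReflTransGen.head_induction_on with
  | refl => exact .refl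
  | head hac hcb ih =>
    have hc := hconvex _ ha b hb _ (.single hac) hcb
    exact .head ⟨hac, ha, hc⟩ (ih hc)

theorem IsSCC.mem_of_reflTransGen {C : Set V} (hC : IsSCC A C) {c c' x : V} (hc : c ∈ C)
    (hc' : c' ∈ C) (hcx : ReflTransGen A c x) (hxc' : ReflTransGen A x c') : x ∈ C := by
  set D := {y | (∃ c ∈ C, ReflTransGen A c y) ∧ ∃ c' ∈ C, ReflTransGen A y c'}
  have hCD : C ⊆ D := fun c hc => ⟨⟨c, hc, .refl⟩, c, hc, .refl⟩
  have hDC : D = C := hC.2 D (stronglyConnected_of_reflTransGen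
    (fun _ ⟨⟨c, hc, hca⟩, _⟩ _ ⟨_, c', hc', hbc'⟩ _ hax hxb =>
      ⟨⟨c, hc, hca.trans hax⟩, c', hc', hxb.trans hbc'⟩)
    (fun _ ⟨_, c', hc', hac'⟩ _ ⟨⟨c, hc, hcb⟩, _⟩ =>
      (hac'.trans (ReflTransGen.mono (fun _ _ h => h.1) _ _ (hC.1 c' hc' c hc))).trans hcb)) hCD
  exact hDC ▸ ⟨⟨c, hc, hcx⟩, c', hc', hxc'⟩

namespace IsPathFrom

variable {a b c : V} {l₁ l₂ : List V}

theorem append_tail (h₁ : IsPathFrom A a b l₁) (h₂ : IsPathFrom A b c l₂)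
    (hdisj : ∀ x ∈ l₁, x ∈ l₂ → x = b) : IsPathFrom A a c (l₁ ++ l₂.tail) := by
  obtain ⟨hchain₁, hnodup₁, hhead₁, hlast₁⟩ := h₁
  obtain ⟨hchain₂, hnodup₂, hhead₂, hlast₂⟩ := h₂
  have hl₁ : l₁.dropLast ++ [b] = l₁ := List.dropLast_append_getLast? b hlast₁
  have hl₂ : b :: l₂.tail = l₂ := (List.eq_cons_of_mem_head? hhead₂).symm
  rw [← hl₂, List.nodup_cons] at hnodup₂
  refine ⟨?_, ?_, ?_, ?_⟩
  · rw [← hl₁] at hchain₁ ⊢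
    exact hchain₁.append_overlap (hl₂ ▸ hchain₂) (List.cons_ne_nil _ _)
  · refine List.nodup_append.2 ⟨hnodup₁, hnodup₂.2, fun x hx₁ y hy₂ hxy => hnodup₂.1 ?_⟩
    subst hxy
    exact hdisj x hx₁ (hl₂ ▸ List.mem_cons_of_mem _ hy₂) ▸ hy₂
  · simp [List.head?_append, hhead₁]
  · rw [← hl₂] at hlast₂
    rw [List.getLast?_append, hlast₁]
    simpa [List.getLast?_cons] using hlast₂

theorem dropLast_append (h₁ : IsPathFrom A a b l₁) (h₂ : IsPathFrom A b c l₂)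
    (hdisj : ∀ x ∈ l₁, x ∈ l₂ → x = b) : IsPathFrom A a c (l₁.dropLast ++ l₂) := by
  have hl : l₁.dropLast ++ l₂ = l₁ ++ l₂.tail := by
    rw [← List.dropLast_append_getLast? b h₁.2.2.2, List.dropLast_concat, List.append_assoc,
      List.singleton_append, ← List.eq_cons_of_mem_head? h₂.2.2.1]
  exact hl ▸ h₁.append_tail h₂ hdisj

end IsPathFrom

end

theorem path_inside_component_between_entrance_and_exit_is_useful_general
    (A : V → V → Prop) (s t : V) (C : Set V)
    (hC : IsSCC A C)
    (u v : V) (hu : IsEntrance A s C u) (hv : IsExit A t C v)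
    (Q : List V) (hQ : IsPathFrom A u v Q) (hQC : ∀ x ∈ Q, x ∈ C) :
    PathUseful A s t Q := by
  obtain ⟨huC, P, hP, hPC⟩ := hu
  obtain ⟨hvC, R, hR, hRC⟩ := hv
  have hPQ : IsPathFrom A s v (P.dropLast ++ Q) :=
    hP.dropLast_append hQ fun x hxP hxQ => hPC x hxP (hQC x hxQ)
  have hPR : ∀ x ∈ P, x ∈ R → x ∈ C := fun x hxP hxR =>
    hC.mem_of_reflTransGen hvC huC (hR.1.reflTransGen_of_head?_eq_of_mem hR.2.2.1 hxR)
      (hP.1.reflTransGen_of_mem_of_getLast?_eq hP.2.2.2 hxP)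
  have hPQR : IsPathFrom A s t (P.dropLast ++ Q ++ R.tail) := by
    refine hPQ.append_tail hR fun x hx hxR => hRC x hxR ?_
    rcases List.mem_append.1 hx with hxP | hxQ
    · exact hPR x (List.dropLast_subset _ hxP) hxR
    · exact hQC x hxQ
  exact ⟨_, hPQR, P.dropLast, R.tail, rfl⟩

/-- if `C` is a strongly connected component avoiding `s,t` with an
entrance `u` and an exit `v`, then any simple `u,v`-path `Q` lying inside `C`
is useful, i.e. extends to a simple `s,t`-path. -/
theorem path_inside_component_between_entrance_and_exit_is_useful
    (A : V → V → Prop) (s t : V) (C : Set V)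
    (hC : IsSCC A C) (hs : s ∉ C) (ht : t ∉ C)
    (u v : V) (hu : IsEntrance A s C u) (hv : IsExit A t C v)
    (Q : List V) (hQ : IsPathFrom A u v Q) (hQC : ∀ x ∈ Q, x ∈ C) :
    PathUseful A s t Q :=
  path_inside_component_between_entrance_and_exit_is_useful_general A s t C hC u v hu hv Q hQ hQC
end

section
/- In a directed graph, a strongly connected component C with no entrance (or with no exit) contains no useful arc: no arc of C lies on any simple s,t-path. -/
/-!
Directed graphs are modelled by an arc relation `A : V → V → Prop`.
A simple directed path is a `List V` that is `Chain' A`, has no repeated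
vertices, and has prescribed first and last vertices.
-/

variable {V : Type*}

private lemma getLast?_cons_ne_nil' {a : V} {l : List V} (h : l ≠ []) :
    (a :: l).getLast? = l.getLast? := by
  cases l with
  | nil => simp at h
  | cons b m => rfl

/-- From a simple path starting at `s` that meets `C`, extract a prefix that is a
simple path from `s` to its first vertex in `C`, meeting `C` only there. -/
private lemma first_in_C (A : V → V → Prop) (C : Set V) :
    ∀ (m : List V) (s : V), m.Chain' A → m.Nodup → m.head? = some s →
    (∃ x ∈ m, x ∈ C) →
    ∃ u ∈ C, ∃ m', m' <+: m ∧ IsPathFrom A s u m' ∧ ∀ y ∈ m', y ∈ C → y = u := by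
  intro m
  induction m with
  | nil => intro s _ _ hh; simp at hh
  | cons c rest ih =>
    intro s hch hnd hh hx
    simp only [List.head?_cons, Option.some.injEq] at hh
    subst hh
    by_cases hsC : c ∈ C
    · exact ⟨c, hsC, [c], ⟨rest, rfl⟩,
        ⟨List.isChain_singleton c, List.nodup_singleton c, rfl, rfl⟩, by simp⟩
    · obtain ⟨x, hxm, hxC⟩ := hx
      have hxr : x ∈ rest := by
        rcases List.mem_cons.1 hxm with rfl | h'
        · exact absurd hxC hsC
        · exact h'
      obtain ⟨c', rest', rfl⟩ : ∃ c' rest', rest = c' :: rest' := by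
        cases rest with
        | nil => simp at hxr
        | cons a l => exact ⟨a, l, rfl⟩
      obtain ⟨u, huC, m', hpre, ⟨hch', hnd', hh', hl'⟩, honly⟩ :=
        ih c' hch.tail hnd.of_cons rfl ⟨x, hxr, hxC⟩
      have hm'ne : m' ≠ [] := by intro h; subst h; simp at hh'
      have hpre2 : c :: m' <+: c :: c' :: rest' := (List.cons_prefix_cons).2 ⟨rfl, hpre⟩
      refine ⟨u, huC, c :: m', hpre2, ⟨hch.prefix hpre2, hnd.sublist hpre2.sublist, rfl, ?_⟩, ?_⟩
      · rw [getLast?_cons_ne_nil' hm'ne]; exact hl'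
      · intro y hy hyC
        rcases List.mem_cons.1 hy with rfl | h'
        · exact absurd hyC hsC
        · exact honly y h' hyC

/-- a strongly connected component `C` (avoiding `s,t`) with no
entrance, or with no exit, contains no useful arc. -/
theorem component_without_entrance_or_exit_has_no_useful_arc
    (A : V → V → Prop) (s t : V) (C : Set V)
    (hC : IsSCC A C) (hs : s ∉ C) (ht : t ∉ C)
    (h : (¬ ∃ u, IsEntrance A s C u) ∨ (¬ ∃ v, IsExit A t C v))
    (a b : V) (ha : a ∈ C) (hb : b ∈ C) (hab : A a b) :
    ¬ ArcUseful A s t a b := by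
  rintro ⟨l, ⟨hch, hnd, hh, hl⟩, p, q, rfl⟩
  have hsplit : p ++ [a, b] ++ q = (p ++ [a]) ++ (b :: q) := by simp
  rw [hsplit] at hch hnd hh hl
  -- entrance
  have hpre1 : (p ++ [a]) <+: (p ++ [a]) ++ (b :: q) := ⟨b :: q, rfl⟩
  have hh1 : (p ++ [a]).head? = some s := by
    rwa [List.head?_append_of_ne_nil _ (by simp)] at hh
  obtain ⟨u, huC, m', _, hpath, honly⟩ :=
    first_in_C A C (p ++ [a]) s (hch.prefix hpre1) (hnd.sublist hpre1.sublist) hh1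
      ⟨a, by simp, ha⟩
  have hent : ∃ u, IsEntrance A s C u := ⟨u, huC, m', hpath, honly⟩
  -- exit
  have hsuf : (b :: q) <:+ (p ++ [a]) ++ (b :: q) := ⟨p ++ [a], rfl⟩
  have hh2 : (b :: q).reverse.head? = some t := by
    rw [List.head?_reverse]
    rwa [List.getLast?_append_of_ne_nil (l₁ := p ++ [a]) (by simp)] at hl
  have hch2 : (b :: q).reverse.Chain' (flip A) :=
    List.isChain_reverse.2 (hch.suffix hsuf)
  obtain ⟨v, hvC, m', _, ⟨hch', hnd', hh', hl'⟩, honly'⟩ :=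
    first_in_C (flip A) C (b :: q).reverse t hch2
      (List.nodup_reverse.2 (hnd.sublist hsuf.sublist)) hh2 ⟨b, by simp, hb⟩
  have hexit : ∃ v, IsExit A t C v := by
    refine ⟨v, hvC, m'.reverse, ⟨List.isChain_reverse.2 ?_, List.nodup_reverse.2 hnd', ?_, ?_⟩, ?_⟩
    · exact hch'
    · rwa [List.head?_reverse]
    · rwa [List.getLast?_reverse]
    · intro y hy hyC
      exact honly' y (List.mem_reverse.1 hy) hyC
  rcases h with h | h
  · exact h hent
  · exact h hexit
end

section
/- Every forward flipped path with respect to the lowest floor F* is useful: if P is a path arc-disjoint from F* starting at a vertex v of F* and ending at a vertex w of F* with v before w on F*, whose interior avoids F*, then replacing the v,w-subpath of an extension of F* by P yields a simple s,t-path containing P. -/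
/-!
Directed graphs are modelled by an arc relation `A : V → V → Prop`.
A simple directed path is a `List V` that is `Chain' A`, has no repeated
vertices, and has prescribed first and last vertices.
-/

variable {V : Type*}

/-!
Since `T` meets `C` only at `t'` and `P` runs inside `C`, the path `P` meets the simple
`s,t`-path `F* ++ T` only in `v` and `w`. Cutting that path at `v` and `w` and inserting `P`
between the two outer pieces therefore keeps it simple.
-/

theorem List.exists_eq_append_cons_append_cons_of_idxOf_lt [DecidableEq V] {a b : V}
    {l : List V} (h : l.idxOf a < l.idxOf b) (hb : b ∈ l) :
    ∃ L M R, l = L ++ a :: (M ++ b :: R) := by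
  induction l with
  | nil => simp at h
  | cons x xs ih =>
    by_cases hxa : x = a
    · subst hxa
      obtain ⟨M, R, rfl⟩ := List.append_of_mem (show b ∈ xs by grind)
      exact ⟨[], M, R, rfl⟩
    · have hxb : x ≠ b := by rintro rfl; simp at h
      obtain ⟨L, M, R, rfl⟩ := ih (by grind) (by grind)
      exact ⟨x :: L, M, R, rfl⟩

namespace IsPathFrom
variable {A : V → V → Prop} {s t u v w : V}

theorem eq_cons_tail {l : List V} (h : IsPathFrom A s t l) : l = s :: l.tail := by
  obtain ⟨_, _, hh, _⟩ := h
  cases l <;> simp_all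

theorem head_notMem_tail {l : List V} (h : IsPathFrom A s t l) : s ∉ l.tail := by
  have hn := h.2.1
  rw [h.eq_cons_tail] at hn
  exact (List.nodup_cons.mp hn).1

theorem append_tail_s15 {l m : List V} (hl : IsPathFrom A s u l) (hm : IsPathFrom A u t m)
    (hnd : (l ++ m.tail).Nodup) : IsPathFrom A s t (l ++ m.tail) := by
  obtain ⟨hlc, -, hlh, hll⟩ := hl
  obtain ⟨m, rfl⟩ : ∃ m', m = u :: m' := ⟨_, hm.eq_cons_tail⟩
  obtain ⟨hmc, -, -, hml⟩ := hm
  have hl : l ≠ [] := by rintro rfl; simp at hlh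
  refine ⟨List.isChain_append.mpr ⟨hlc, hmc.tail, ?_⟩, hnd, ?_, ?_⟩
  · intro x hx y hy
    rw [hll, Option.mem_some_iff] at hx
    subst hx
    exact (List.isChain_cons.mp hmc).1 y hy
  · rwa [List.tail_cons, List.head?_append_of_ne_nil _ hl]
  · rcases eq_or_ne m [] with rfl | hm
    · simpa [hll] using hml
    · rwa [List.tail_cons, List.getLast?_append_of_ne_nil _ hm, ← List.getLast?_cons_of_ne_nil hm]

theorem of_append_cons {l m : List V} (h : IsPathFrom A s t (l ++ u :: m)) :
    IsPathFrom A s u (l ++ [u]) ∧ IsPathFrom A u t (u :: m) := by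
  obtain ⟨hc, hn, hh, hl⟩ := h
  have hc' : List.IsChain A ((l ++ [u]) ++ m) := by rw [List.append_assoc]; exact hc
  have hn' : ((l ++ [u]) ++ m).Nodup := by rw [List.append_assoc]; exact hn
  refine ⟨⟨hc'.left_of_append, hn'.of_append_left, ?_, by simp⟩,
    ⟨hc.right_of_append, hn.of_append_right, rfl, ?_⟩⟩
  · cases l <;> simp_all
  · simpa [List.getLast?_append] using hl

theorem splice {L M R P : List V} (hG : IsPathFrom A s t (L ++ v :: (M ++ w :: R)))
    (hP : IsPathFrom A v w P)
    (hmeet : ∀ x ∈ P, x ∈ L ++ v :: (M ++ w :: R) → x = v ∨ x = w) :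
    IsPathFrom A s t (L ++ P ++ R) := by
  have hnd : (L ++ P ++ R).Nodup := by
    have hGn := hG.2.1
    have hPn := hP.2.1
    simp only [List.nodup_append, List.nodup_cons, List.mem_append, List.mem_cons] at hGn hmeet ⊢
    grind
  obtain ⟨hsv, -⟩ := of_append_cons hG
  obtain ⟨-, hwt⟩ := of_append_cons (l := L ++ v :: M) (by simpa using hG)
  have hLP : L ++ P = L ++ [v] ++ P.tail := by rw [hP.eq_cons_tail]; simp
  rw [hLP] at hnd ⊢
  exact (hsv.append_tail_s15 hP (hnd.sublist (List.sublist_append_left _ _))).append_tail_s15 hwt hnd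

end IsPathFrom

theorem forward_flipped_path_is_useful_general [DecidableEq V]
    (A : V → V → Prop) (s t t' : V) (C : Set V)
    (Fstar T : List V)
    (hF : IsPathFrom A s t' Fstar)
    (hT : IsPathFrom A t' t T) (hTC : ∀ x ∈ T, x ∈ C → x = t')
    (hext : (Fstar ++ T.tail).Nodup)
    (P : List V) (v w : V)
    (hP : IsPathFrom A v w P) (hPC : ∀ x ∈ P, x ∈ C)
    (hw : w ∈ Fstar)
    (hord : Fstar.idxOf v < Fstar.idxOf w)
    (hint : ∀ x ∈ P, x ∈ Fstar → x = v ∨ x = w) :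
    PathUseful A s t P := by
  have hG := hF.append_tail_s15 hT hext
  have hmeet : ∀ x ∈ P, x ∈ Fstar ++ T.tail → x = v ∨ x = w := by
    intro x hxP hxG
    rcases List.mem_append.mp hxG with hxF | hxT
    · exact hint x hxP hxF
    · obtain rfl := hTC x (List.mem_of_mem_tail hxT) (hPC x hxP)
      exact absurd hxT hT.head_notMem_tail
  obtain ⟨L, M, R, rfl⟩ := List.exists_eq_append_cons_append_cons_of_idxOf_lt hord hw
  simp only [List.append_assoc, List.cons_append] at hG hmeet
  exact ⟨_, hG.splice hP hmeet, L, R ++ T.tail, by simp⟩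

/-- every forward flipped path w.r.t. the lowest floor `F*` is
useful.  Here `F*` is a simple path from `s` to an exit `t'` of the component
`C` (with `F* ⊆ C`), extendable by a `t',t`-path `T` meeting `C` only at `t'`
to a simple `s,t`-path `F* ++ T.tail`.  If `P` is a path inside `C`, arc-disjoint
from `F*`, from a vertex `v` of `F*` to a vertex `w` of `F*` with `v` before `w`
on `F*` and interior avoiding `F*`, then replacing the `v,w`-portion of the
extension of `F*` by `P` yields a simple `s,t`-path containing `P`. -/
theorem forward_flipped_path_is_useful [DecidableEq V]
    (A : V → V → Prop) (s t t' : V) (C : Set V)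
    (Fstar T : List V)
    (hF : IsPathFrom A s t' Fstar) (hFC : ∀ x ∈ Fstar, x ∈ C)
    (hT : IsPathFrom A t' t T) (hTC : ∀ x ∈ T, x ∈ C → x = t')
    (hext : (Fstar ++ T.tail).Nodup)
    (P : List V) (v w : V)
    (hP : IsPathFrom A v w P) (hPC : ∀ x ∈ P, x ∈ C)
    (hv : v ∈ Fstar) (hw : w ∈ Fstar)
    (hord : Fstar.idxOf v < Fstar.idxOf w)
    (hint : ∀ x ∈ P, x ∈ Fstar → x = v ∨ x = w)
    (harc : ∀ a b : V, [a, b] <:+: P → ¬ [a, b] <:+: Fstar) :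
    PathUseful A s t P :=
  forward_flipped_path_is_useful_general A s t t' C Fstar T hF hT hTC hext P v w hP hPC hw hord hint
end

section
/- In a strongly connected component H with entrances b_1,...,b_{n1} and exits b'_1,...,b'_{n2} appearing in counterclockwise order b_1,...,b_{n1},b'_1,...,b'_{n2} along its boundary cycle, any simple path P inside H from some entrance b_i to some exit b'_j can be extended, using boundary arcs from b_1 to b_i and from b'_j to b'_{n2}, to a simple path from b_1 to b'_{n2} inside H containing P. -/
/-!
Directed graphs are modelled by an arc relation `A : V → V → Prop`.
A simple directed path is a `List V` that is `Chain' A`, has no repeated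
vertices, and has prescribed first and last vertices.
-/

variable {V : Type*}

/-- `l` is a (simple) directed cycle: a nonempty duplicate-free list whose
consecutive members are arcs, together with the wrap-around arc. -/
def IsCycle (A : V → V → Prop) (l : List V) : Prop :=
  l ≠ [] ∧ l.Nodup ∧ l.Chain' A ∧ ∀ h : l ≠ [], A (l.getLast h) (l.head h)

/-- The cycle (given as a list) `l` contains the arc `(u,v)`. -/
def CycleHasArc (l : List V) (u v : V) : Prop :=
  [u, v] <:+: l ∨ ∃ h : l ≠ [], l.getLast h = u ∧ l.head h = v

/-!
Read from `b1`, the boundary cycle meets all entrances before all exits, so its initial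
segment up to `bn` is a simple boundary path from `b1` to `bn` that passes through `bi` and
later through `bj`. Replacing the part of this path between `bi` and `bj` by `P` gives the
required path: `P` meets the boundary only in `bi` and `bj`, so it avoids the rest.
-/

namespace List

theorem Sublist.exists_prefix_getLast?_eq {α : Type*} {l₁ l : List α} {b : α}
    (h : l₁ <+ l) (hb : l₁.getLast? = some b) :
    ∃ w, w <+: l ∧ w.getLast? = some b ∧ l₁ <+ w := by
  induction h with
  | slnil => simp at hb
  | cons a _ ih =>
    obtain ⟨w, hw, hwb, hsub⟩ := ih hb
    refine ⟨a :: w, (prefix_cons_inj a).2 hw, ?_, hsub.cons a⟩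
    simp [getLast?_cons, hwb]
  | @cons_cons l₁ l a _ ih =>
    cases l₁ with
    | nil =>
      simp only [getLast?_singleton, Option.some.injEq] at hb
      exact ⟨[a], by simp, by simp [hb], Sublist.refl _⟩
    | cons c l₁ =>
      rw [getLast?_cons_cons] at hb
      obtain ⟨w, hw, hwb, hsub⟩ := ih hb
      refine ⟨a :: w, (prefix_cons_inj a).2 hw, ?_, hsub.cons_cons a⟩
      simp [getLast?_cons, hwb]

theorem IsChain.exists_isPathFrom_prefix_of_sublist {A : V → V → Prop} {l l₁ : List V}
    {a b : V} (hc : l.IsChain A) (hn : l.Nodup) (ha : l.head? = some a) (hl₁ : l₁ <+ l)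
    (hb : l₁.getLast? = some b) : ∃ w, w <+: l ∧ IsPathFrom A a b w ∧ l₁ <+ w := by
  obtain ⟨w, hwl, hwb, hl₁w⟩ := hl₁.exists_prefix_getLast?_eq hb
  refine ⟨w, hwl, ⟨hc.prefix hwl, hn.sublist hwl.sublist, ?_, hwb⟩, hl₁w⟩
  obtain ⟨rest, rfl⟩ := hwl
  cases w with
  | nil => simp at hwb
  | cons c w => simpa using ha

theorem IsChain.exists_isPathFrom_of_sublist {A : V → V → Prop} {l : List V} {x y : V}
    (hc : l.IsChain A) (hn : l.Nodup) (hxy : [x, y] <+ l) :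
    ∃ pre M post, l = pre ++ M ++ post ∧ IsPathFrom A x y M := by
  obtain ⟨r₁, r₂, rfl, hx, hy⟩ := cons_sublist_iff.1 hxy
  obtain ⟨s, t, rfl⟩ := append_of_mem hx
  obtain ⟨t', u, rfl⟩ := append_of_mem (singleton_sublist.1 hy)
  have hl : s ++ x :: t ++ (t' ++ y :: u) = s ++ (x :: (t ++ t') ++ [y]) ++ u := by simp
  rw [hl] at hc hn ⊢
  have hinfix : x :: (t ++ t') ++ [y] <:+: s ++ (x :: (t ++ t') ++ [y]) ++ u :=
    infix_append _ _ _
  exact ⟨s, _, u, rfl, hc.infix hinfix, hn.sublist hinfix.sublist, by simp,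
    by rw [getLast?_concat]⟩

theorem IsChain.replace_infix {α : Type*} {R : α → α → Prop} {pre M M' post : List α}
    (h : (pre ++ M ++ post).IsChain R) (hM' : M'.IsChain R)
    (hhead : M'.head? = M.head?) (hlast : M'.getLast? = M.getLast?) :
    (pre ++ M' ++ post).IsChain R := by
  simp only [append_assoc, isChain_append, head?_append, hhead, hlast] at h ⊢
  exact ⟨h.1, ⟨hM', h.2.1.2.1, h.2.1.2.2⟩, h.2.2⟩

end List

theorem IsPathFrom.replace_infix {A : V → V → Prop} {a b x y : V} {pre M P post : List V}
    (hW : IsPathFrom A a b (pre ++ M ++ post)) (hM : IsPathFrom A x y M)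
    (hP : IsPathFrom A x y P) (hPW : ∀ v ∈ P, v ∈ pre ++ M ++ post → v ∈ M) :
    IsPathFrom A a b (pre ++ P ++ post) := by
  obtain ⟨hc, hn, hh, hl⟩ := hW
  have hhead : P.head? = M.head? := hP.2.2.1.trans hM.2.2.1.symm
  have hlast : P.getLast? = M.getLast? := hP.2.2.2.trans hM.2.2.2.symm
  refine ⟨hc.replace_infix hP.1 hhead hlast, ?_, by simpa [hhead] using hh,
    by simpa [hlast] using hl⟩
  simp only [List.append_assoc, List.nodup_append', List.disjoint_append_right] at hn ⊢
  obtain ⟨hpre, ⟨-, hpost, hMpost⟩, hpreM, hprepost⟩ := hn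
  refine ⟨hpre, ⟨hP.2.1, hpost, fun v hvP hvpost => ?_⟩, fun v hvpre hvP => ?_, hprepost⟩
  · exact hMpost (hPW v hvP (by simp [hvpost])) hvpost
  · exact hpreM hvpre (hPW v hvP (by simp [hvpre]))

theorem extend_path_along_boundary_general
    (A : V → V → Prop) (H : Set V)
    (Q Qr E X : List V) (b1 bn bi bj : V)
    (hQH : ∀ x ∈ Q, x ∈ H)
    (hQr : IsCycle A Qr) (hrot : Q.IsRotated Qr)
    (hsub : List.Sublist (E ++ X) Qr)
    (hhead : Qr.head? = some b1)
    (hbn : X.getLast? = some bn)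
    (hbi : bi ∈ E) (hbj : bj ∈ X)
    (P : List V)
    (hP : IsPathFrom A bi bj P) (hPH : ∀ x ∈ P, x ∈ H)
    (hPint : ∀ x ∈ P, x ∈ Q → x = bi ∨ x = bj) :
    ∃ L : List V, IsPathFrom A b1 bn L ∧ P <:+: L ∧ ∀ x ∈ L, x ∈ H := by
  obtain ⟨-, hQrn, hQrc, -⟩ := hQr
  obtain ⟨W, hWQr, hW, hEXW⟩ :=
    hQrc.exists_isPathFrom_prefix_of_sublist hQrn hhead hsub (b := bn) (by simp [hbn])
  have hWQ : ∀ x ∈ W, x ∈ Q := fun x hx => hrot.mem_iff.2 (hWQr.subset hx)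
  obtain ⟨pre, M, post, rfl, hM⟩ := hW.1.exists_isPathFrom_of_sublist hW.2.1
    (((List.singleton_sublist.2 hbi).append (List.singleton_sublist.2 hbj)).trans hEXW)
  have hPW : ∀ v ∈ P, v ∈ pre ++ M ++ post → v ∈ M := fun v hvP hvW => by
    rcases hPint v hvP (hWQ v hvW) with rfl | rfl
    exacts [List.mem_of_head? hM.2.2.1, List.mem_of_getLast? hM.2.2.2]
  refine ⟨pre ++ P ++ post, hW.replace_infix hM hP hPW, List.infix_append _ _ _, ?_⟩
  simp only [List.mem_append]
  rintro x ((hx | hx) | hx)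
  · exact hQH x (hWQ x (by simp [hx]))
  · exact hPH x hx
  · exact hQH x (hWQ x (by simp [hx]))

/-- let `H` be a strongly connected plane component whose
boundary is a (counterclockwise) directed cycle `Q`, and let the entrances
`E = [b_1,…,b_{n1}]` and exits `X = [b'_1,…,b'_{n2}]` appear, non-interleaved,
in this order along `Q` (expressed by `E ++ X` being a sublist of the rotation
`Qr` of `Q` starting at the first entrance `b1`).  Then any simple path `P`
inside `H` from an entrance `bi` to an exit `bj`, whose only boundary vertices
are its endpoints, can be extended by boundary arcs from `b1` to `bi` and from
`bj` to the last exit `bn` into a simple path inside `H` from `b1` to `bn`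
containing `P`. -/
theorem extend_path_along_boundary
    (A : V → V → Prop) (H : Set V)
    (Q Qr E X : List V) (b1 bn bi bj : V)
    (hQ : IsCycle A Q) (hQH : ∀ x ∈ Q, x ∈ H)
    (hQr : IsCycle A Qr) (hrot : Q.IsRotated Qr)
    (hsub : List.Sublist (E ++ X) Qr)
    (hhead : Qr.head? = some b1)
    (hb1 : E.head? = some b1) (hbn : X.getLast? = some bn)
    (hbi : bi ∈ E) (hbj : bj ∈ X) (hij : bi ≠ bj)
    (P : List V)
    (hP : IsPathFrom A bi bj P) (hPH : ∀ x ∈ P, x ∈ H)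
    (hPint : ∀ x ∈ P, x ∈ Q → x = bi ∨ x = bj) :
    ∃ L : List V, IsPathFrom A b1 bn L ∧ P <:+: L ∧ ∀ x ∈ L, x ∈ H :=
  extend_path_along_boundary_general A H Q Qr E X b1 bn bi bj hQH hQr hrot hsub hhead hbn hbi hbj P
    hP hPH hPint
end
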